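/- Let n ≥ k ≥ 2, let 𝔽 be a field and let S_k ⊆ C([n],k). If the k-hyperclique complex ⟨S_k⟩ is D-perfect, then the simplicial matroid Sim_k^n(S_k) is strongly triangulable over 𝔽. -/

import Mathlib

/-!
Common definitions for simplicial matroids, following Cordovil–Lemos–Linhares Sales,
"Dirac's theorem on simplicial matroids".

We model `[n] = {1,…,n}` by `Fin n`, and a subset of `[n]` by a `Finset (Fin n)`.
A family `S_k ⊆ C([n],k)` is a `Finset (Finset (Fin n))` (all of whose members
have cardinality `k`, which is imposed by hypotheses in the theorems).
-/

open Finset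

/-- The incidence number `[F' : F]`: if `F = i₁ < i₂ < ⋯ < iₘ` and `F' = F \ {iⱼ}`
then `[F' : F] = (-1)ʲ` (with `j` the 1-based position of the deleted element),
and `[F' : F] = 0` otherwise. -/
def inc {n : ℕ} (F' F : Finset (Fin n)) : ℤ :=
  ∑ i ∈ F, if F' = F.erase i then (-1 : ℤ) ^ (F.filter (fun j => j ≤ i)).card else 0

/-- The family `C([n], m)` of `m`-element subsets of `[n]`, as a type. -/
abbrev Csets (n m : ℕ) := {F : Finset (Fin n) // F.card = m}

/-- `∂_k F`, the boundary of a single `k`-subset `F` of `[n]`,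
as a vector of `𝔽^{C([n],k-1)}`. -/
def bvec (𝔽 : Type*) [Field 𝔽] (n k : ℕ) (F : Finset (Fin n)) : Csets n (k - 1) → 𝔽 :=
  fun F' => ((inc F'.1 F : ℤ) : 𝔽)

/-- Independence in the simplicial matroid `Sim_k^n(S_k)` over `𝔽`:
`X ⊆ S_k` is independent iff the vectors `∂_k F`, `F ∈ X`, are linearly independent. -/
def SimIndep (𝔽 : Type*) [Field 𝔽] (n k : ℕ) (Sk X : Finset (Finset (Fin n))) : Prop :=
  X ⊆ Sk ∧ LinearIndependent 𝔽 (fun F : X => bvec 𝔽 n k F.1)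

/-- A circuit of `Sim_k^n(S_k)`: a minimal dependent subset of the ground set. -/
def SimCircuit (𝔽 : Type*) [Field 𝔽] (n k : ℕ) (Sk C : Finset (Finset (Fin n))) : Prop :=
  C ⊆ Sk ∧ ¬ LinearIndependent 𝔽 (fun F : C => bvec 𝔽 n k F.1) ∧
    ∀ C' ⊂ C, LinearIndependent 𝔽 (fun F : C' => bvec 𝔽 n k F.1)

/-- The rank (in `Sim_k^n`) of a set `X` of `k`-subsets of `[n]`:
the dimension of the span of the boundaries of its members. -/
noncomputable def simRank (𝔽 : Type*) [Field 𝔽] (n k : ℕ) (X : Finset (Finset (Fin n))) : ℕ :=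
  Module.finrank 𝔽 (Submodule.span 𝔽 ((fun F => bvec 𝔽 n k F) '' (X : Set (Finset (Fin n)))))

/-- A cocircuit of `Sim_k^n(S_k)`, i.e. a circuit of the dual matroid:
a minimal set `C ⊆ S_k` whose complement does not span (`X` is independent in the dual
matroid iff `r(E ∖ X) = r(E)`). -/
def SimCocircuit (𝔽 : Type*) [Field 𝔽] (n k : ℕ) (Sk C : Finset (Finset (Fin n))) : Prop :=
  C ⊆ Sk ∧ simRank 𝔽 n k (Sk \ C) < simRank 𝔽 n k Sk ∧
    ∀ C' ⊂ C, simRank 𝔽 n k (Sk \ C') = simRank 𝔽 n k Sk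

/-- The boundary map `∂_k : 𝔽^{S_k} → 𝔽^{C([n],k-1)}`. -/
noncomputable def bdryMap (𝔽 : Type*) [Field 𝔽] (n k : ℕ) (Sk : Finset (Finset (Fin n))) :
    (↥Sk → 𝔽) →ₗ[𝔽] (Csets n (k - 1) → 𝔽) :=
  Matrix.mulVecLin (Matrix.of fun (F' : Csets n (k - 1)) (F : ↥Sk) => ((inc F'.1 F.1 : ℤ) : 𝔽))

/-- The coboundary `δ^{k-1} V` of a `(k-1)`-subset `V` of `[n]`,
as a vector of `𝔽^{S_k}`; its `F`-coordinate is `[V : F]`. -/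
def cobdry (𝔽 : Type*) [Field 𝔽] {n : ℕ} (Sk : Finset (Finset (Fin n)))
    (V : Finset (Fin n)) : ↥Sk → 𝔽 :=
  fun F => ((inc V F.1 : ℤ) : 𝔽)

/-- The boundary `∂_{k+1} X` of a `(k+1)`-subset `X` of `[n]`, regarded as a vector
of `𝔽^{S_k}`; its `F`-coordinate is `[F : X]`. -/
def pbdry (𝔽 : Type*) [Field 𝔽] {n : ℕ} (Sk : Finset (Finset (Fin n)))
    (X : Finset (Fin n)) : ↥Sk → 𝔽 :=
  fun F => ((inc F.1 X : ℤ) : 𝔽)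

open scoped Classical in
/-- The support of a vector of `𝔽^{S_k}`, as a set of `k`-subsets of `[n]`. -/
noncomputable def suppFin {𝔽 : Type*} [Field 𝔽] {n : ℕ} {Sk : Finset (Finset (Fin n))}
    (v : ↥Sk → 𝔽) : Finset (Finset (Fin n)) :=
  (Sk.attach.filter fun F => v F ≠ 0).image Subtype.val

/-- `supp(δ^{k-1} V) ⊆ S_k`. -/
noncomputable def suppδ (𝔽 : Type*) [Field 𝔽] {n : ℕ} (Sk : Finset (Finset (Fin n)))
    (V : Finset (Fin n)) : Finset (Finset (Fin n)) :=
  suppFin (cobdry 𝔽 Sk V)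

/-- The cocircuit space of `Sim_k^n(S_k)`: the orthogonal complement, with respect to the
standard bilinear form on `𝔽^{S_k}`, of the circuit space `ker ∂_k`. -/
noncomputable def cocircSpace (𝔽 : Type*) [Field 𝔽] (n k : ℕ) (Sk : Finset (Finset (Fin n))) :
    Submodule 𝔽 (↥Sk → 𝔽) where
  carrier := {w | ∀ v ∈ LinearMap.ker (bdryMap 𝔽 n k Sk), ∑ F, v F * w F = 0}
  zero_mem' := by intro v hv; simp
  add_mem' := by
    intro a b ha hb v hv
    have h1 := ha v hv
    have h2 := hb v hv
    simp only [Pi.add_apply, mul_add, Finset.sum_add_distrib]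
    rw [h1, h2, add_zero]
  smul_mem' := by
    intro c w hw v hv
    have h := hw v hv
    simp only [Pi.smul_apply, smul_eq_mul]
    calc ∑ F, v F * (c * w F) = ∑ F, c * (v F * w F) := by
          exact Finset.sum_congr rfl fun F _ => by ring
      _ = c * ∑ F, v F * w F := (Finset.mul_sum _ _ _).symm
      _ = 0 := by rw [h, mul_zero]

/-- The faces of the `k`-hyperclique complex `⟨S_k⟩`: all `F ⊆ [n]` with `|F| < k`,
together with all `F` every `k`-element subset of which lies in `S_k`. -/
def IsFace {n : ℕ} (k : ℕ) (Sk : Finset (Finset (Fin n))) (F : Finset (Fin n)) : Prop :=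
  F.card < k ∨ ∀ G ⊆ F, G.card = k → G ∈ Sk

/-- A facet of `⟨S_k⟩`: an inclusion-maximal face. -/
def IsFacet {n : ℕ} (k : ℕ) (Sk : Finset (Finset (Fin n))) (F : Finset (Fin n)) : Prop :=
  IsFace k Sk F ∧ ∀ G, IsFace k Sk G → F ⊆ G → F = G

/-- `V` is simplicial in `⟨S_k⟩` if there is exactly one facet `X` of `⟨S_k⟩`
with `V ⊊ X`. -/
def SimplicialFace {n : ℕ} (k : ℕ) (Sk : Finset (Finset (Fin n))) (V : Finset (Fin n)) : Prop :=
  ∃! X, IsFacet k Sk X ∧ V ⊂ X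

/-- The `k`-skeleta of the complexes `Δ_0 = ⟨S_k⟩`, `Δ_{j+1} = Δ_j ∖∖ V_j`, where
`Δ ∖∖ V = ⟨(skeleton of Δ) ∖ supp(δ^{k-1} V)⟩` (0-indexed). -/
noncomputable def delSeq (𝔽 : Type*) [Field 𝔽] {n : ℕ} (Sk : Finset (Finset (Fin n)))
    (V : ℕ → Finset (Fin n)) : ℕ → Finset (Finset (Fin n))
  | 0 => Sk
  | j + 1 => delSeq 𝔽 Sk V j \ suppδ 𝔽 (delSeq 𝔽 Sk V j) (V j)

/-- `C*_j := supp(δ^{k-1} V_j) ∖ ⋃_{i<j} supp(δ^{k-1} V_i)` (0-indexed). -/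
noncomputable def Cstar (𝔽 : Type*) [Field 𝔽] {n : ℕ} (Sk : Finset (Finset (Fin n)))
    (V : ℕ → Finset (Fin n)) (j : ℕ) : Finset (Finset (Fin n)) :=
  suppδ 𝔽 Sk (V j) \ (Finset.range j).biUnion (fun i => suppδ 𝔽 Sk (V i))

/-- `(V_1,…,V_r)` (0-indexed: `V 0, …, V (r-1)`) is a basic linear sequence for `⟨S_k⟩`,
where `r` is the rank of `Sim_k^n(S_k)`: each `V_j` is a `(k-1)`-subset of `[n]` and each
`C*_j` is a cocircuit of `Sim_k^n(S_k(Δ_{j-1}))`. -/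
def BasicLinearSeq (𝔽 : Type*) [Field 𝔽] (n k : ℕ) (Sk : Finset (Finset (Fin n))) (r : ℕ)
    (V : ℕ → Finset (Fin n)) : Prop :=
  simRank 𝔽 n k Sk = r ∧ (∀ j < r, (V j).card = k - 1) ∧
    ∀ j < r, SimCocircuit 𝔽 n k (delSeq 𝔽 Sk V j) (Cstar 𝔽 Sk V j)

/-- `⟨S_k⟩` is D-perfect: there is a basic linear sequence `V_1,…,V_r` such that each `V_j`
is simplicial in `Δ_{j-1}`. -/
def DPerfect (𝔽 : Type*) [Field 𝔽] (n k : ℕ) (Sk : Finset (Finset (Fin n))) : Prop :=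
  ∃ V : ℕ → Finset (Fin n),
    BasicLinearSeq 𝔽 n k Sk (simRank 𝔽 n k Sk) V ∧
      ∀ j < simRank 𝔽 n k Sk, SimplicialFace k (delSeq 𝔽 Sk V j) (V j)

/-- A flat of `Sim_k^n(S_k)`: a closed subset of the ground set. -/
def SimFlat (𝔽 : Type*) [Field 𝔽] (n k : ℕ) (Sk X : Finset (Finset (Fin n))) : Prop :=
  X ⊆ Sk ∧ ∀ F ∈ Sk,
    bvec 𝔽 n k F ∈ Submodule.span 𝔽 ((fun G => bvec 𝔽 n k G) '' (X : Set (Finset (Fin n)))) →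
      F ∈ X

/-- A hyperplane of `Sim_k^n(S_k)`: a flat of rank one less than the rank of the matroid. -/
def SimHyperplane (𝔽 : Type*) [Field 𝔽] (n k : ℕ) (Sk H : Finset (Finset (Fin n))) : Prop :=
  SimFlat 𝔽 n k Sk H ∧ simRank 𝔽 n k H + 1 = simRank 𝔽 n k Sk

/-- A modular flat of `Sim_k^n(S_k)`:
`r(X) + r(Y) = r(X ∪ Y) + r(X ∩ Y)` for every flat `Y`. -/
def ModularFlat (𝔽 : Type*) [Field 𝔽] (n k : ℕ) (Sk X : Finset (Finset (Fin n))) : Prop :=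
  SimFlat 𝔽 n k Sk X ∧ ∀ Y, SimFlat 𝔽 n k Sk Y →
    simRank 𝔽 n k X + simRank 𝔽 n k Y = simRank 𝔽 n k (X ∪ Y) + simRank 𝔽 n k (X ∩ Y)

open scoped Classical in
/-- The closure of `X` in `Sim_k^n(S_k)`. -/
noncomputable def simClosure (𝔽 : Type*) [Field 𝔽] (n k : ℕ)
    (Sk X : Finset (Finset (Fin n))) : Finset (Finset (Fin n)) :=
  Sk.filter fun F =>
    bvec 𝔽 n k F ∈ Submodule.span 𝔽 ((fun G => bvec 𝔽 n k G) '' (X : Set (Finset (Fin n))))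

/-- `Sim_k^n(S_k)` is supersolvable: it admits a maximal chain of modular flats
`cl(∅) = X_0 ⊊ X_1 ⊊ ⋯ ⊊ X_r = S_k`, `r` the rank. -/
def Supersolvable (𝔽 : Type*) [Field 𝔽] (n k : ℕ) (Sk : Finset (Finset (Fin n))) : Prop :=
  ∃ X : ℕ → Finset (Finset (Fin n)),
    X 0 = simClosure 𝔽 n k Sk ∅ ∧ X (simRank 𝔽 n k Sk) = Sk ∧
      (∀ i < simRank 𝔽 n k Sk, X i ⊂ X (i + 1)) ∧
      ∀ i ≤ simRank 𝔽 n k Sk, ModularFlat 𝔽 n k Sk (X i)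

/-- `H` is a dense hyperplane of `Sim_k^n(ground)`: a hyperplane of the form
`ground ∖ supp(δ^{k-1} V)` for some `(k-1)`-subset `V` simplicial in `⟨ground⟩`. -/
def DenseHyp (𝔽 : Type*) [Field 𝔽] (n k : ℕ) (ground H : Finset (Finset (Fin n))) : Prop :=
  SimHyperplane 𝔽 n k ground H ∧
    ∃ V : Finset (Fin n), V.card = k - 1 ∧ SimplicialFace k ground V ∧
      H = ground \ suppδ 𝔽 ground V

/-- `Sim_k^n(S_k)` is superdense: there is a chain `∅ = X_0 ⊊ X_1 ⊊ ⋯ ⊊ X_r = S_k` of flats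
(`r` the rank) with each `X_i` a dense hyperplane of `Sim_k^n(X_{i+1})`. -/
def Superdense (𝔽 : Type*) [Field 𝔽] (n k : ℕ) (Sk : Finset (Finset (Fin n))) : Prop :=
  ∃ X : ℕ → Finset (Finset (Fin n)),
    X 0 = ∅ ∧ X (simRank 𝔽 n k Sk) = Sk ∧
      (∀ i ≤ simRank 𝔽 n k Sk, SimFlat 𝔽 n k Sk (X i)) ∧
      (∀ i < simRank 𝔽 n k Sk, X i ⊂ X (i + 1)) ∧
      ∀ i < simRank 𝔽 n k Sk, DenseHyp 𝔽 n k (X (i + 1)) (X i)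

/-- `Sim_k^n(S_k)` is triangulable over `𝔽`: the boundaries of the `(k+1)`-faces of `⟨S_k⟩`
span the circuit space `ker ∂_k`. -/
def Triangulable (𝔽 : Type*) [Field 𝔽] (n k : ℕ) (Sk : Finset (Finset (Fin n))) : Prop :=
  Submodule.span 𝔽
      {v : ↥Sk → 𝔽 | ∃ X : Finset (Fin n), X.card = k + 1 ∧ IsFace k Sk X ∧ v = pbdry 𝔽 Sk X}
    = LinearMap.ker (bdryMap 𝔽 n k Sk)

/-- `Sim_k^n(S_k)` is strongly triangulable over `𝔽`: there are `(k+1)`-faces `X_1,…,X_{m'}`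
of `⟨S_k⟩` whose boundaries span `ker ∂_k` and such that every circuit `C` has a
representing vector `C⃗` with support `C` which is a combination, with nonzero coefficients,
of boundaries `∂_{k+1} X_{i_j}` with `⋃_{F ∈ C} F = ⋃_j X_{i_j}`. -/
def StronglyTriangulable (𝔽 : Type*) [Field 𝔽] (n k : ℕ)
    (Sk : Finset (Finset (Fin n))) : Prop :=
  ∃ (m' : ℕ) (Xs : Fin m' → Finset (Fin n)),
    (∀ i, (Xs i).card = k + 1 ∧ IsFace k Sk (Xs i)) ∧
    Submodule.span 𝔽 (Set.range fun i => pbdry 𝔽 Sk (Xs i)) = LinearMap.ker (bdryMap 𝔽 n k Sk) ∧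
    ∀ C, SimCircuit 𝔽 n k Sk C →
      ∃ (s : ℕ) (idx : Fin s → Fin m') (a : Fin s → 𝔽) (Cv : ↥Sk → 𝔽),
        (∀ j, a j ≠ 0) ∧ suppFin Cv = C ∧
        Cv = ∑ j, a j • pbdry 𝔽 Sk (Xs (idx j)) ∧
        C.biUnion id = Finset.univ.biUnion fun j : Fin s => Xs (idx j)

/-- The simple graph `([n], S_2)`. -/
def graphOf {n : ℕ} (S2 : Finset (Finset (Fin n))) : SimpleGraph (Fin n) where
  Adj u v := u ≠ v ∧ ({u, v} : Finset (Fin n)) ∈ S2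
  symm := by
    constructor
    intro u v h
    exact ⟨h.1.symm, by rw [Finset.pair_comm]; exact h.2⟩
  loopless := by constructor; intro u h; exact h.1 rfl

/-- A simple graph is chordal if every cycle of length at least four has a chord, i.e. an
edge of the graph joining two non-consecutive vertices of the cycle. -/
def Chordal {α : Type*} (G : SimpleGraph α) : Prop :=
  ∀ (v : α) (w : G.Walk v v), w.IsCycle → 4 ≤ w.length →
    ∃ u₁ u₂, u₁ ∈ w.support ∧ u₂ ∈ w.support ∧ G.Adj u₁ u₂ ∧ s(u₁, u₂) ∉ w.edges

/-!
Induct on the rank, peeling off the first set `V` of the basic linear sequence. If `V` is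
simplicial in `⟨S_k⟩` with unique facet `X ⊋ V`, the star of `V` consists of the `k`-sets `y V`,
`y ∈ X ∖ V`, all of whose `(k+1)`-supersets `x y V` inside `X` are faces. Given a cycle `u`, pick
`x` with `u(x V) ≠ 0` (if `u` meets the star at all) and subtract
`∑_y (u(y V)/[y V : x y V]) ∂(x y V)`: the result is a cycle vanishing on the star except possibly
at `x V`, hence there as well (its boundary has `V`-coordinate `±` that coefficient). It therefore
lives on `⟨S_k⟩ ∖∖ V`, whose rank is one less because the star is a cocircuit; the new faces
`x y V` used lie in the union of the faces of `u`. Proving this for every cycle, not only for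
circuits, is what makes the induction go through.
-/

section Incidence

variable {n : ℕ}

lemma inc_erase {F : Finset (Fin n)} {i : Fin n} (hi : i ∈ F) :
    inc (F.erase i) F = (-1) ^ #(F.filter (· ≤ i)) := by
  rw [inc, sum_eq_single_of_mem i hi
    (fun j hj hji => if_neg fun h => hji ((erase_inj F hj).1 h.symm)), if_pos rfl]

lemma exists_eq_erase_of_inc_ne_zero {F' F : Finset (Fin n)} (h : inc F' F ≠ 0) :
    ∃ i ∈ F, F' = F.erase i := by
  contrapose! h
  exact sum_eq_zero fun i hi => if_neg (h i hi)

lemma subset_of_inc_ne_zero {F' F : Finset (Fin n)} (h : inc F' F ≠ 0) : F' ⊆ F := by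
  obtain ⟨i, -, rfl⟩ := exists_eq_erase_of_inc_ne_zero h
  exact erase_subset i F

lemma inc_insert_ne_zero {V : Finset (Fin n)} {a : Fin n} (ha : a ∉ V) :
    inc V (insert a V) ≠ 0 := by
  have h := inc_erase (mem_insert_self a V)
  rw [erase_insert ha] at h
  rw [h]
  exact pow_ne_zero _ (by decide)

lemma inc_ne_zero_iff {V F : Finset (Fin n)} (hc : #V + 1 = #F) : inc V F ≠ 0 ↔ V ⊆ F := by
  refine ⟨subset_of_inc_ne_zero, fun hVF => ?_⟩
  obtain ⟨a, ha, rfl⟩ := exists_eq_insert_iff.2 ⟨hVF, hc⟩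
  exact inc_insert_ne_zero ha

lemma cast_inc_ne_zero_iff (𝔽 : Type*) [Field 𝔽] {F' F : Finset (Fin n)} :
    ((inc F' F : ℤ) : 𝔽) ≠ 0 ↔ inc F' F ≠ 0 := by
  refine ⟨fun h h0 => h (by rw [h0, Int.cast_zero]), fun h => ?_⟩
  obtain ⟨i, hi, rfl⟩ := exists_eq_erase_of_inc_ne_zero h
  rw [inc_erase hi, Int.cast_pow, Int.cast_neg, Int.cast_one]
  exact pow_ne_zero _ (neg_ne_zero.2 one_ne_zero)

lemma inc_erase_erase_mul_inc_erase {X : Finset (Fin n)} {a b : Fin n} (ha : a ∈ X) (hb : b ∈ X)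
    (hab : a ≠ b) :
    inc ((X.erase a).erase b) (X.erase a) * inc (X.erase a) X =
      -(inc ((X.erase b).erase a) (X.erase b) * inc (X.erase b) X) := by
  wlog hlt : a < b generalizing a b
  · rw [this hb ha hab.symm (lt_of_le_of_ne (not_lt.1 hlt) hab.symm), neg_neg]
  have hbX : #(X.filter (· ≤ b)) = #((X.filter (· ≤ b)).erase a) + 1 :=
    (card_erase_add_one (mem_filter.2 ⟨ha, hlt.le⟩)).symm
  rw [inc_erase ha, inc_erase hb, inc_erase (mem_erase.2 ⟨hab.symm, hb⟩),
    inc_erase (mem_erase.2 ⟨hab, ha⟩), filter_erase, filter_erase,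
    erase_eq_of_notMem (s := X.filter (· ≤ a)) fun h => hlt.not_ge (mem_filter.1 h).2, hbX]
  ring

lemma sum_inc_mul_inc_erase (X F : Finset (Fin n)) :
    ∑ i ∈ X, inc F (X.erase i) * inc (X.erase i) X = 0 := by
  by_cases h : ∃ a ∈ X, ∃ b ∈ X, a ≠ b ∧ F = (X.erase a).erase b
  · obtain ⟨a, ha, b, hb, hab, rfl⟩ := h
    have key := inc_erase_erase_mul_inc_erase ha hb hab
    rw [erase_right_comm (s := X) (a := b)] at key
    rw [← sum_subset (insert_subset ha (singleton_subset_iff.2 hb)), sum_pair hab, key,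
      neg_add_cancel]
    intro i _ hi
    refine mul_eq_zero_of_left (not_not.1 fun h0 => hi ?_) _
    have hsub := subset_of_inc_ne_zero h0
    by_contra hiab
    simp only [mem_insert, mem_singleton, not_or] at hiab
    exact notMem_erase i X (hsub (mem_erase.2 ⟨hiab.2, mem_erase.2 ⟨hiab.1, ‹i ∈ X›⟩⟩))
  · push Not at h
    refine sum_eq_zero fun i hi => mul_eq_zero_of_left (not_not.1 fun h0 => ?_) _
    obtain ⟨j, hj, hF⟩ := exists_eq_erase_of_inc_ne_zero h0
    exact h i hi j (mem_erase.1 hj).2 (mem_erase.1 hj).1.symm hF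

end Incidence

section Chains

variable {𝔽 : Type*} [Field 𝔽] {n k : ℕ}

variable (𝔽) in
noncomputable def extendByZero (Sk : Finset (Finset (Fin n))) :
    (↥Sk → 𝔽) →ₗ[𝔽] Finset (Fin n) → 𝔽 where
  toFun u G := if h : G ∈ Sk then u ⟨G, h⟩ else 0
  map_add' u v := by ext G; by_cases h : G ∈ Sk <;> simp [h]
  map_smul' c u := by ext G; by_cases h : G ∈ Sk <;> simp [h]

lemma extendByZero_val {Sk : Finset (Finset (Fin n))} (u : ↥Sk → 𝔽) (F : ↥Sk) :
    extendByZero 𝔽 Sk u F.1 = u F := dif_pos F.2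

lemma extendByZero_of_notMem {Sk : Finset (Finset (Fin n))} (u : ↥Sk → 𝔽)
    {G : Finset (Fin n)} (hG : G ∉ Sk) : extendByZero 𝔽 Sk u G = 0 := dif_neg hG

lemma mem_suppFin {Sk : Finset (Finset (Fin n))} {u : ↥Sk → 𝔽} {G : Finset (Fin n)} :
    G ∈ suppFin u ↔ extendByZero 𝔽 Sk u G ≠ 0 := by
  by_cases hG : G ∈ Sk
  · simp [suppFin, hG, ← extendByZero_val u ⟨G, hG⟩]
  · simp [suppFin, hG, extendByZero_of_notMem u hG]

lemma suppFin_subset {Sk : Finset (Finset (Fin n))} (u : ↥Sk → 𝔽) : suppFin u ⊆ Sk :=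
  fun _ hG => not_not.1 fun h => mem_suppFin.1 hG (extendByZero_of_notMem u h)

lemma suppFin_sub_subset {Sk : Finset (Finset (Fin n))} (u v : ↥Sk → 𝔽) :
    suppFin (u - v) ⊆ suppFin u ∪ suppFin v := by
  intro G hG
  simp only [mem_union, mem_suppFin, map_sub, Pi.sub_apply] at hG ⊢
  by_contra! h
  exact hG (by rw [h.1, h.2, sub_zero])

lemma bdryMap_apply {Sk : Finset (Finset (Fin n))} (u : ↥Sk → 𝔽) (F' : Csets n (k - 1)) :
    bdryMap 𝔽 n k Sk u F' = ∑ G, (inc F'.1 G : 𝔽) * extendByZero 𝔽 Sk u G := by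
  rw [← sum_subset (subset_univ Sk) fun G _ hG => by rw [extendByZero_of_notMem u hG, mul_zero],
    ← sum_coe_sort Sk]
  simp [bdryMap, Matrix.mulVec, dotProduct, extendByZero_val]

lemma bdryMap_eq_sum_smul_bvec {Sk : Finset (Finset (Fin n))} (u : ↥Sk → 𝔽) :
    bdryMap 𝔽 n k Sk u = ∑ F, u F • bvec 𝔽 n k F.1 := by
  ext F'
  simp [bdryMap, Matrix.mulVec, dotProduct, bvec, mul_comm]

lemma extendByZero_pbdry_of_mem {Sk : Finset (Finset (Fin n))} {X G : Finset (Fin n)}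
    (hG : G ∈ Sk) : extendByZero 𝔽 Sk (pbdry 𝔽 Sk X) G = inc G X :=
  extendByZero_val (pbdry 𝔽 Sk X) ⟨G, hG⟩

lemma extendByZero_pbdry {Sk : Finset (Finset (Fin n))} {X : Finset (Fin n)}
    (hX : ∀ i ∈ X, X.erase i ∈ Sk) (G : Finset (Fin n)) :
    extendByZero 𝔽 Sk (pbdry 𝔽 Sk X) G = inc G X := by
  by_cases hG : G ∈ Sk
  · exact extendByZero_pbdry_of_mem hG
  · rw [extendByZero_of_notMem _ hG, eq_comm]
    by_contra h
    obtain ⟨i, hi, rfl⟩ := exists_eq_erase_of_inc_ne_zero ((cast_inc_ne_zero_iff 𝔽).1 h)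
    exact hG (hX i hi)

lemma bdryMap_pbdry {Sk : Finset (Finset (Fin n))} {X : Finset (Fin n)}
    (hX : ∀ i ∈ X, X.erase i ∈ Sk) : bdryMap 𝔽 n k Sk (pbdry 𝔽 Sk X) = 0 := by
  ext F'
  have hsupp : ∀ G ∉ X.image X.erase, inc G X = 0 := fun G hG =>
    not_not.1 fun h => hG (by
      obtain ⟨i, hi, rfl⟩ := exists_eq_erase_of_inc_ne_zero h
      exact mem_image_of_mem _ hi)
  rw [bdryMap_apply, Pi.zero_apply, ← sum_subset (subset_univ _) fun G _ hG => by
      rw [extendByZero_pbdry hX, hsupp G hG, Int.cast_zero, mul_zero],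
    sum_image fun a ha b hb h => (erase_inj X ha).1 h]
  simp_rw [extendByZero_pbdry hX, ← Int.cast_mul, ← Int.cast_sum, sum_inc_mul_inc_erase,
    Int.cast_zero]

lemma extendByZero_cobdry {Sk : Finset (Finset (Fin n))} {V F : Finset (Fin n)} (hF : F ∈ Sk) :
    extendByZero 𝔽 Sk (cobdry 𝔽 Sk V) F = inc V F :=
  extendByZero_val (cobdry 𝔽 Sk V) ⟨F, hF⟩

variable (𝔽) in
/-- Extension by zero for `Sk' ⊆ Sk`, restriction for `Sk ⊆ Sk'`. -/
noncomputable def extendChain (Sk' Sk : Finset (Finset (Fin n))) :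
    (↥Sk' → 𝔽) →ₗ[𝔽] ↥Sk → 𝔽 :=
  LinearMap.funLeft 𝔽 𝔽 Subtype.val ∘ₗ extendByZero 𝔽 Sk'

lemma extendByZero_extendChain {Sk' Sk : Finset (Finset (Fin n))} (hsub : Sk' ⊆ Sk)
    (u : ↥Sk' → 𝔽) : extendByZero 𝔽 Sk (extendChain 𝔽 Sk' Sk u) = extendByZero 𝔽 Sk' u := by
  ext G
  by_cases hG : G ∈ Sk
  · exact extendByZero_val _ ⟨G, hG⟩
  · rw [extendByZero_of_notMem _ hG, extendByZero_of_notMem _ fun h => hG (hsub h)]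

lemma suppFin_extendChain {Sk' Sk : Finset (Finset (Fin n))} (hsub : Sk' ⊆ Sk)
    (u : ↥Sk' → 𝔽) : suppFin (extendChain 𝔽 Sk' Sk u) = suppFin u := by
  ext G
  rw [mem_suppFin, mem_suppFin, extendByZero_extendChain hsub]

lemma bdryMap_extendChain {Sk' Sk : Finset (Finset (Fin n))} (hsub : Sk' ⊆ Sk)
    (u : ↥Sk' → 𝔽) : bdryMap 𝔽 n k Sk (extendChain 𝔽 Sk' Sk u) = bdryMap 𝔽 n k Sk' u := by
  ext F'
  rw [bdryMap_apply, bdryMap_apply, extendByZero_extendChain hsub]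

lemma extendChain_pbdry {Sk' Sk : Finset (Finset (Fin n))} {X : Finset (Fin n)}
    (hX : ∀ i ∈ X, X.erase i ∈ Sk') : extendChain 𝔽 Sk' Sk (pbdry 𝔽 Sk' X) = pbdry 𝔽 Sk X := by
  ext F
  exact extendByZero_pbdry hX F.1

lemma extendChain_extendChain {Sk' Sk : Finset (Finset (Fin n))} {u : ↥Sk → 𝔽}
    (hu : suppFin u ⊆ Sk') :
    extendChain 𝔽 Sk' Sk (extendChain 𝔽 Sk Sk' u) = u := by
  ext F
  change extendByZero 𝔽 Sk' _ F.1 = u F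
  by_cases hF : F.1 ∈ Sk'
  · exact (extendByZero_val _ ⟨F.1, hF⟩).trans (extendByZero_val u F)
  · have hu0 : F.1 ∉ suppFin u := fun h => hF (hu h)
    rw [mem_suppFin, not_not, extendByZero_val] at hu0
    rw [extendByZero_of_notMem _ hF, hu0]

end Chains

section Circuits

variable {𝔽 : Type*} [Field 𝔽] {n k : ℕ}

lemma linearIndependent_bvec_iff {C : Finset (Finset (Fin n))} :
    LinearIndependent 𝔽 (fun F : ↥C => bvec 𝔽 n k F.1) ↔
      ∀ g : ↥C → 𝔽, bdryMap 𝔽 n k C g = 0 → g = 0 := by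
  simp only [Fintype.linearIndependent_iff, bdryMap_eq_sum_smul_bvec, funext_iff, Pi.zero_apply]

lemma not_linearIndependent_suppFin {Sk : Finset (Finset (Fin n))} {u : ↥Sk → 𝔽}
    (hu : bdryMap 𝔽 n k Sk u = 0) (hu0 : u ≠ 0) :
    ¬ LinearIndependent 𝔽 (fun F : ↥(suppFin u) => bvec 𝔽 n k F.1) := by
  have hext : extendChain 𝔽 (suppFin u) Sk (extendChain 𝔽 Sk (suppFin u) u) = u :=
    extendChain_extendChain le_rfl
  rw [linearIndependent_bvec_iff]
  intro h
  refine hu0 (hext ▸ ?_)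
  rw [h (extendChain 𝔽 Sk (suppFin u) u)
    (by rw [← bdryMap_extendChain (suppFin_subset u), hext, hu]), map_zero]

lemma SimCircuit.exists_suppFin_eq {Sk C : Finset (Finset (Fin n))}
    (hC : SimCircuit 𝔽 n k Sk C) : ∃ u : ↥Sk → 𝔽, bdryMap 𝔽 n k Sk u = 0 ∧ suppFin u = C := by
  obtain ⟨hCS, hdep, hmin⟩ := hC
  rw [linearIndependent_bvec_iff] at hdep
  push Not at hdep
  obtain ⟨g, hg, hg0⟩ := hdep
  refine ⟨extendChain 𝔽 C Sk g, by rw [bdryMap_extendChain hCS, hg], ?_⟩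
  rw [suppFin_extendChain hCS]
  by_contra hne
  exact not_linearIndependent_suppFin hg hg0
    (hmin _ (Finset.ssubset_iff_subset_ne.2 ⟨suppFin_subset g, hne⟩))

end Circuits

section FaceCombination

variable {𝔽 : Type*} [Field 𝔽] {n k : ℕ}

lemma suppFin_add_subset {Sk : Finset (Finset (Fin n))} (u v : ↥Sk → 𝔽) :
    suppFin (u + v) ⊆ suppFin u ∪ suppFin v := by
  intro G hG
  simp only [mem_union, mem_suppFin, map_add, Pi.add_apply] at hG ⊢
  by_contra! h
  exact hG (by rw [h.1, h.2, add_zero])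

lemma subset_of_extendByZero_pbdry_ne_zero {Sk : Finset (Finset (Fin n))} {X G : Finset (Fin n)}
    (h : extendByZero 𝔽 Sk (pbdry 𝔽 Sk X) G ≠ 0) : G ⊆ X := by
  by_cases hG : G ∈ Sk
  · rw [extendByZero_pbdry_of_mem hG] at h
    exact subset_of_inc_ne_zero ((cast_inc_ne_zero_iff 𝔽).1 h)
  · exact absurd (extendByZero_of_notMem _ hG) h

variable (𝔽) in
/-- Repetitions among the `Y j` are allowed, so that such combinations can be concatenated. -/
def IsFaceCombination (Sk T : Finset (Finset (Fin n))) (u : ↥Sk → 𝔽) (U : Finset (Fin n)) :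
    Prop :=
  ∃ (s : ℕ) (Y : Fin s → Finset (Fin n)) (a : Fin s → 𝔽), (∀ j, Y j ∈ T) ∧ (∀ j, a j ≠ 0) ∧
    u = ∑ j, a j • pbdry 𝔽 Sk (Y j) ∧ univ.biUnion Y = U

namespace IsFaceCombination

variable {Sk T : Finset (Finset (Fin n))} {u v : ↥Sk → 𝔽} {U W : Finset (Fin n)}

lemma zero : IsFaceCombination 𝔽 Sk T 0 ∅ :=
  ⟨0, Fin.elim0, Fin.elim0, fun j => j.elim0, fun j => j.elim0, by simp, by simp⟩

lemma smul_pbdry {X : Finset (Fin n)} (hX : X ∈ T) {a : 𝔽} (ha : a ≠ 0) :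
    IsFaceCombination 𝔽 Sk T (a • pbdry 𝔽 Sk X) X :=
  ⟨1, fun _ => X, fun _ => a, fun _ => hX, fun _ => ha, by simp, by simp⟩

lemma add (hu : IsFaceCombination 𝔽 Sk T u U) (hv : IsFaceCombination 𝔽 Sk T v W) :
    IsFaceCombination 𝔽 Sk T (u + v) (U ∪ W) := by
  obtain ⟨s, Y, a, hY, ha, rfl, rfl⟩ := hu
  obtain ⟨t, Z, b, hZ, hb, rfl, rfl⟩ := hv
  refine ⟨s + t, Fin.append Y Z, Fin.append a b,
    Fin.forall_fin_add _ |>.2 ⟨by simpa using hY, by simpa using hZ⟩,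
    Fin.forall_fin_add _ |>.2 ⟨by simpa using ha, by simpa using hb⟩,
    by simp [Fin.sum_univ_add], ?_⟩
  ext x
  simp only [mem_biUnion, mem_univ, true_and, mem_union]
  constructor
  · rintro ⟨j, hj⟩
    induction j using Fin.addCases with
    | left j => exact .inl ⟨j, by simpa using hj⟩
    | right j => exact .inr ⟨j, by simpa using hj⟩
  · rintro (⟨j, hj⟩ | ⟨j, hj⟩)
    · exact ⟨Fin.castAdd t j, by simpa using hj⟩
    · exact ⟨Fin.natAdd s j, by simpa using hj⟩

lemma sum {ι : Type*} {S : Finset ι} {f : ι → ↥Sk → 𝔽} {Y : ι → Finset (Fin n)}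
    (h : ∀ i ∈ S, IsFaceCombination 𝔽 Sk T (f i) (Y i)) :
    IsFaceCombination 𝔽 Sk T (∑ i ∈ S, f i) (S.biUnion Y) := by
  classical
  induction S using Finset.induction_on with
  | empty => simpa using zero
  | insert i S hi ih =>
    rw [sum_insert hi, biUnion_insert]
    exact (h i (mem_insert_self i S)).add (ih fun j hj => h j (mem_insert_of_mem hj))

lemma mono (h : IsFaceCombination 𝔽 Sk T u U) {T' : Finset (Finset (Fin n))} (hT : T ⊆ T') :
    IsFaceCombination 𝔽 Sk T' u U := by
  obtain ⟨s, Y, a, hY, ha, hu, hU⟩ := h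
  exact ⟨s, Y, a, fun j => hT (hY j), ha, hu, hU⟩

lemma extendChain {Sk' : Finset (Finset (Fin n))} {u : ↥Sk' → 𝔽}
    (h : IsFaceCombination 𝔽 Sk' T u U) (hT : ∀ X ∈ T, ∀ i ∈ X, X.erase i ∈ Sk') :
    IsFaceCombination 𝔽 Sk T (extendChain 𝔽 Sk' Sk u) U := by
  obtain ⟨s, Y, a, hY, ha, rfl, hU⟩ := h
  refine ⟨s, Y, a, hY, ha, ?_, hU⟩
  simp only [map_sum, map_smul, extendChain_pbdry (hT _ (hY _))]

lemma mem_span (h : IsFaceCombination 𝔽 Sk T u U) {S : Set (↥Sk → 𝔽)}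
    (hS : ∀ X ∈ T, pbdry 𝔽 Sk X ∈ S) : u ∈ Submodule.span 𝔽 S := by
  obtain ⟨s, Y, a, hY, -, rfl, -⟩ := h
  exact Submodule.sum_mem _ fun j _ => Submodule.smul_mem _ _ (Submodule.subset_span (hS _ (hY j)))

lemma bdryMap_eq_zero (h : IsFaceCombination 𝔽 Sk T u U)
    (hT : ∀ X ∈ T, ∀ i ∈ X, X.erase i ∈ Sk) : bdryMap 𝔽 n k Sk u = 0 := by
  have hle : Submodule.span 𝔽 (pbdry 𝔽 Sk '' T) ≤ LinearMap.ker (bdryMap 𝔽 n k Sk) :=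
    Submodule.span_le.2 <| Set.image_subset_iff.2 fun X hX => bdryMap_pbdry (hT X hX)
  exact hle (h.mem_span fun X hX => Set.mem_image_of_mem _ hX)

lemma biUnion_suppFin_subset (h : IsFaceCombination 𝔽 Sk T u U) :
    (suppFin u).biUnion id ⊆ U := by
  obtain ⟨s, Y, a, -, -, rfl, rfl⟩ := h
  intro x hx
  obtain ⟨G, hG, hxG⟩ := mem_biUnion.1 hx
  rw [mem_suppFin, map_sum, Finset.sum_apply] at hG
  obtain ⟨j, -, hj⟩ := exists_ne_zero_of_sum_ne_zero hG
  rw [map_smul, Pi.smul_apply] at hj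
  exact mem_biUnion.2
    ⟨j, mem_univ j, subset_of_extendByZero_pbdry_ne_zero (right_ne_zero_of_smul hj) hxG⟩

lemma add_biUnion_suppFin (hv : IsFaceCombination 𝔽 Sk T v ((suppFin v).biUnion id))
    (hu : IsFaceCombination 𝔽 Sk T u U) (hU : U ⊆ (suppFin (v + u)).biUnion id) :
    IsFaceCombination 𝔽 Sk T (v + u) ((suppFin (v + u)).biUnion id) := by
  have hsuppu := hu.biUnion_suppFin_subset
  convert hv.add hu using 1
  refine Subset.antisymm (fun x hx => ?_) (union_subset (fun x hx => ?_) hU)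
  · obtain ⟨G, hG, hxG⟩ := mem_biUnion.1 hx
    rcases mem_union.1 (suppFin_add_subset v u hG) with hG | hG
    · exact mem_union_left _ (mem_biUnion.2 ⟨G, hG, hxG⟩)
    · exact mem_union_right _ (hsuppu (mem_biUnion.2 ⟨G, hG, hxG⟩))
  · obtain ⟨G, hG, hxG⟩ := mem_biUnion.1 hx
    rw [← add_sub_cancel_right v u] at hG
    rcases mem_union.1 (suppFin_sub_subset _ u hG) with hG | hG
    · exact mem_biUnion.2 ⟨G, hG, hxG⟩
    · exact hU (hsuppu (mem_biUnion.2 ⟨G, hG, hxG⟩))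

end IsFaceCombination

end FaceCombination

section Star

variable {𝔽 : Type*} [Field 𝔽] {n k : ℕ} {Sk : Finset (Finset (Fin n))}

lemma mem_suppδ_iff (hSk : ∀ F ∈ Sk, #F = k) {V F : Finset (Fin n)} (hV : #V + 1 = k) :
    F ∈ suppδ 𝔽 Sk V ↔ F ∈ Sk ∧ V ⊆ F := by
  rw [suppδ, mem_suppFin]
  by_cases hF : F ∈ Sk
  · rw [extendByZero_cobdry hF, cast_inc_ne_zero_iff, inc_ne_zero_iff (by rw [hV, hSk F hF])]
    exact ⟨fun h => ⟨hF, h⟩, And.right⟩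
  · simp [hF, extendByZero_of_notMem]

/-- The `V`-coordinate of `∂u` is `±u(aV)`. -/
lemma extendByZero_eq_zero_of_bdryMap_eq_zero {u : ↥Sk → 𝔽} (hu : bdryMap 𝔽 n k Sk u = 0)
    {V : Finset (Fin n)} (hV : #V + 1 = k) {a : Fin n} (ha : a ∉ V)
    (hvan : ∀ F ∈ Sk, V ⊆ F → F ≠ insert a V → extendByZero 𝔽 Sk u F = 0) :
    extendByZero 𝔽 Sk u (insert a V) = 0 := by
  have h := congrFun hu ⟨V, by omega⟩
  rw [bdryMap_apply, Pi.zero_apply, sum_eq_single (insert a V) (fun G _ hG => ?_) (by simp)] at h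
  · exact (mul_eq_zero.1 h).resolve_left ((cast_inc_ne_zero_iff 𝔽).2 (inc_insert_ne_zero ha))
  · by_cases hGS : G ∈ Sk
    · rcases eq_or_ne (inc V G) 0 with h0 | h0
      · rw [h0, Int.cast_zero, zero_mul]
      · rw [hvan G hGS (subset_of_inc_ne_zero h0) hG, mul_zero]
    · rw [extendByZero_of_notMem u hGS, mul_zero]

lemma erase_mem_of_mem_powersetCard {X Y : Finset (Fin n)} (hX : ∀ G ⊆ X, #G = k → G ∈ Sk)
    (hY : Y ∈ X.powersetCard (k + 1)) : ∀ i ∈ Y, Y.erase i ∈ Sk := by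
  rw [mem_powersetCard] at hY
  exact fun i hi => hX _ ((erase_subset i Y).trans hY.1) (by rw [card_erase_of_mem hi, hY.2]; rfl)

lemma exists_mem_forall_imp_ne_zero {α M : Type*} [Zero M] {s : Finset α} (hs : s.Nonempty)
    (f : α → M) : ∃ x ∈ s, ∀ y ∈ s, f y ≠ 0 → f x ≠ 0 := by
  by_cases h : ∃ y ∈ s, f y ≠ 0
  · obtain ⟨y, hy, hy0⟩ := h
    exact ⟨y, hy, fun _ _ _ => hy0⟩
  · push Not at h
    obtain ⟨x, hx⟩ := hs
    exact ⟨x, hx, fun y hy h' => absurd (h y hy) h'⟩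

lemma insert_insert_mem_powersetCard {V X : Finset (Fin n)} (hV : #V + 1 = k) (hVX : V ⊆ X)
    {x y : Fin n} (hx : x ∈ X \ V) (hy : y ∈ X \ V) (hxy : x ≠ y) :
    insert x (insert y V) ∈ X.powersetCard (k + 1) := by
  rw [mem_sdiff] at hx hy
  rw [mem_powersetCard, card_insert_of_notMem (by simp [hx.2, hxy]), card_insert_of_notMem hy.2, hV]
  exact ⟨insert_subset hx.1 (insert_subset hy.1 hVX), rfl⟩

lemma insert_insert_subset_biUnion {𝒮 : Finset (Finset (Fin n))} {V : Finset (Fin n)}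
    {x y : Fin n} (hx : insert x V ∈ 𝒮) (hy : insert y V ∈ 𝒮) :
    insert x (insert y V) ⊆ 𝒮.biUnion id := by
  rw [insert_subset_iff, insert_subset_iff]
  exact ⟨mem_biUnion.2 ⟨_, hx, mem_insert_self x V⟩, mem_biUnion.2 ⟨_, hy, mem_insert_self y V⟩,
    fun z hz => mem_biUnion.2 ⟨_, hx, mem_insert_of_mem hz⟩⟩

lemma extendByZero_sum_smul_pbdry_insert_insert {V X : Finset (Fin n)} (hV : #V + 1 = k)
    (hVX : V ⊆ X) (hX : ∀ G ⊆ X, #G = k → G ∈ Sk) {x z : Fin n} (hx : x ∈ X \ V)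
    (hz : z ∈ X \ V) (hzx : z ≠ x) {S : Finset (Fin n)} (hS : S ⊆ (X \ V).erase x)
    (f : Fin n → 𝔽) :
    extendByZero 𝔽 Sk (∑ y ∈ S, f y • pbdry 𝔽 Sk (insert x (insert y V))) (insert z V) =
      if z ∈ S then f z * inc (insert z V) (insert x (insert z V)) else 0 := by
  have hpbdry : ∀ y ∈ S, extendByZero 𝔽 Sk (pbdry 𝔽 Sk (insert x (insert y V))) (insert z V) =
      inc (insert z V) (insert x (insert y V)) := fun y hy =>
    extendByZero_pbdry (erase_mem_of_mem_powersetCard hX (insert_insert_mem_powersetCard hV hVX hx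
      (mem_erase.1 (hS hy)).2 (mem_erase.1 (hS hy)).1.symm)) _
  simp_rw [map_sum, Finset.sum_apply, map_smul, Pi.smul_apply, smul_eq_mul]
  rw [← sum_ite_eq S z fun y => f y * inc (insert z V) (insert x (insert y V))]
  refine sum_congr rfl fun y hy => ?_
  rw [hpbdry y hy]
  split_ifs with hzy
  · rfl
  have hzxy : z ∉ insert x (insert y V) := by simp [hzx, hzy, (mem_sdiff.1 hz).2]
  rw [show inc (insert z V) (insert x (insert y V)) = 0 from
      not_not.1 fun h => hzxy (subset_of_inc_ne_zero h (mem_insert_self z V)),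
    Int.cast_zero, mul_zero]

lemma forall_mem_suppFin_not_subset (hSk : ∀ F ∈ Sk, #F = k) {V X : Finset (Fin n)}
    (hV : #V + 1 = k) (hstar : ∀ F ∈ Sk, V ⊆ F → F ⊆ X) {w : ↥Sk → 𝔽}
    (hw : bdryMap 𝔽 n k Sk w = 0) {x : Fin n} (hx : x ∉ V)
    (hoff : ∀ z ∈ X \ V, z ≠ x → extendByZero 𝔽 Sk w (insert z V) = 0) :
    ∀ F ∈ suppFin w, ¬ V ⊆ F := by
  have hstarD : ∀ G ∈ Sk, V ⊆ G → ∃ y ∈ X \ V, G = insert y V := fun G hG hVG => by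
    obtain ⟨y, hyV, rfl⟩ := exists_eq_insert_iff.2 ⟨hVG, by rw [hSk G hG, hV]⟩
    exact ⟨y, mem_sdiff.2 ⟨hstar _ hG hVG (mem_insert_self y V), hyV⟩, rfl⟩
  intro F hF hVF
  obtain ⟨z, hzD, rfl⟩ := hstarD F (suppFin_subset _ hF) hVF
  refine mem_suppFin.1 hF ?_
  by_cases hzx : z = x
  · subst hzx
    refine extendByZero_eq_zero_of_bdryMap_eq_zero hw hV hx fun G hG hVG hne => ?_
    obtain ⟨y, hyD, rfl⟩ := hstarD G hG hVG
    exact hoff y hyD fun h => hne (h ▸ rfl)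
  · exact hoff z hzD hzx

lemma exists_star_correction (hSk : ∀ F ∈ Sk, #F = k) {V X : Finset (Fin n)} (hV : #V + 1 = k)
    (hVX : V ⊂ X) (hX : ∀ G ⊆ X, #G = k → G ∈ Sk) (hstar : ∀ F ∈ Sk, V ⊆ F → F ⊆ X)
    {u : ↥Sk → 𝔽} (hu : bdryMap 𝔽 n k Sk u = 0) :
    ∃ c U, IsFaceCombination 𝔽 Sk (X.powersetCard (k + 1)) c U ∧ U ⊆ (suppFin u).biUnion id ∧
      ∀ F ∈ suppFin (u - c), ¬ V ⊆ F := by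
  classical
  set D := X \ V
  set e : Finset (Fin n) → 𝔽 := extendByZero 𝔽 Sk u
  obtain ⟨x, hxD, hx⟩ :=
    exists_mem_forall_imp_ne_zero (sdiff_nonempty.2 (not_subset_of_ssubset hVX)) fun y =>
      e (insert y V)
  set S := (D.erase x).filter fun y => e (insert y V) ≠ 0
  set a : Fin n → 𝔽 := fun y => e (insert y V) / inc (insert y V) (insert x (insert y V))
  have hS : ∀ y ∈ S, y ∈ D ∧ y ≠ x ∧ e (insert y V) ≠ 0 := fun y hy => by
    simp only [S, mem_filter, mem_erase] at hy
    exact ⟨hy.1.2, hy.1.1, hy.2⟩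
  have hinc : ∀ y, y ≠ x → ((inc (insert y V) (insert x (insert y V)) : ℤ) : 𝔽) ≠ 0 :=
    fun y hyx => (cast_inc_ne_zero_iff 𝔽).2
      (inc_insert_ne_zero (by simp [(mem_sdiff.1 hxD).2, Ne.symm hyx]))
  have hc : IsFaceCombination 𝔽 Sk (X.powersetCard (k + 1))
      (∑ y ∈ S, a y • pbdry 𝔽 Sk (insert x (insert y V)))
      (S.biUnion fun y => insert x (insert y V)) :=
    .sum fun y hy => .smul_pbdry
      (insert_insert_mem_powersetCard hV hVX.subset hxD (hS y hy).1 (hS y hy).2.1.symm)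
      (div_ne_zero (hS y hy).2.2 (hinc y (hS y hy).2.1))
  refine ⟨_, _, hc, biUnion_subset.2 fun y hy => insert_insert_subset_biUnion
    (mem_suppFin.2 (hx y (hS y hy).1 (hS y hy).2.2)) (mem_suppFin.2 (hS y hy).2.2), ?_⟩
  refine forall_mem_suppFin_not_subset hSk hV hstar ?_ (mem_sdiff.1 hxD).2 fun z hzD hzx => ?_
  · rw [map_sub, hu, hc.bdryMap_eq_zero fun Y hY => erase_mem_of_mem_powersetCard hX hY, sub_zero]
  · rw [map_sub, Pi.sub_apply, sub_eq_zero, extendByZero_sum_smul_pbdry_insert_insert hV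
      hVX.subset hX hxD hzD hzx (filter_subset _ _)]
    split_ifs with hzS
    · exact (div_mul_cancel₀ _ (hinc z hzx)).symm
    · exact not_not.1 fun h => hzS (mem_filter.2 ⟨mem_erase.2 ⟨hzx, hzD⟩, h⟩)

end Star

section DPerfect

variable {𝔽 : Type*} [Field 𝔽] {n k : ℕ}

lemma simRank_insert_le (X : Finset (Finset (Fin n))) (e : Finset (Fin n)) :
    simRank 𝔽 n k (insert e X) ≤ simRank 𝔽 n k X + 1 := by
  unfold simRank
  rw [coe_insert, Set.image_insert_eq, Submodule.span_insert, add_comm]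
  refine (Submodule.finrank_add_le_finrank_add_finrank _ _).trans (Nat.add_le_add_right ?_ _)
  simpa using finrank_span_le_card (R := 𝔽) {bvec 𝔽 n k e}

lemma SimCocircuit.simRank_sdiff_add_one {Sk E : Finset (Finset (Fin n))}
    (hE : SimCocircuit 𝔽 n k Sk E) : simRank 𝔽 n k (Sk \ E) + 1 = simRank 𝔽 n k Sk := by
  obtain ⟨hESk, hlt, hmin⟩ := hE
  obtain ⟨e, he⟩ : E.Nonempty := nonempty_iff_ne_empty.2 fun h => by simp [h] at hlt
  have h := hmin _ (erase_ssubset he)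
  rw [sdiff_erase (hESk he)] at h
  have := simRank_insert_le (𝔽 := 𝔽) (k := k) (Sk \ E) e
  omega

lemma eq_empty_of_simRank_eq_zero {Sk : Finset (Finset (Fin n))} (hk : 1 ≤ k)
    (hSk : ∀ F ∈ Sk, #F = k) (h : simRank 𝔽 n k Sk = 0) : Sk = ∅ := by
  refine eq_empty_iff_forall_notMem.2 fun F hF => ?_
  obtain ⟨i, hi⟩ := card_pos.1 (hk.trans_eq (hSk F hF).symm)
  have hb : bvec 𝔽 n k F = 0 := by
    have hmem := Submodule.subset_span (R := 𝔽) (Set.mem_image_of_mem (bvec 𝔽 n k) (mem_coe.2 hF))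
    rwa [Submodule.finrank_eq_zero.1 h, SetLike.mem_coe, Submodule.mem_bot] at hmem
  have hcard : #(F.erase i) = k - 1 := by rw [card_erase_of_mem hi, hSk F hF]
  exact (cast_inc_ne_zero_iff 𝔽).2 (by rw [inc_erase hi]; exact pow_ne_zero _ (by decide))
    (congrFun hb ⟨F.erase i, hcard⟩)

lemma suppδ_sdiff (G B : Finset (Finset (Fin n))) (V : Finset (Fin n)) :
    suppδ 𝔽 (G \ B) V = suppδ 𝔽 G V \ B := by
  ext F
  simp only [suppδ, mem_suppFin, mem_sdiff]
  by_cases hF : F ∈ G \ B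
  · rw [extendByZero_cobdry hF, extendByZero_cobdry (mem_sdiff.1 hF).1]
    simp [(mem_sdiff.1 hF).2]
  · rw [extendByZero_of_notMem _ hF]
    by_cases hG : F ∈ G
    · simp_all
    · simp [extendByZero_of_notMem _ hG]

lemma delSeq_shift (Sk : Finset (Finset (Fin n))) (V : ℕ → Finset (Fin n)) (j : ℕ) :
    delSeq 𝔽 (Sk \ suppδ 𝔽 Sk (V 0)) (fun i => V (i + 1)) j = delSeq 𝔽 Sk V (j + 1) := by
  induction j with
  | zero => rfl
  | succ j ih => simp only [delSeq, ih]

lemma Cstar_shift (Sk : Finset (Finset (Fin n))) (V : ℕ → Finset (Fin n)) (j : ℕ) :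
    Cstar 𝔽 (Sk \ suppδ 𝔽 Sk (V 0)) (fun i => V (i + 1)) j = Cstar 𝔽 Sk V (j + 1) := by
  ext F
  simp only [Cstar, suppδ_sdiff, mem_sdiff, mem_biUnion, mem_range, Nat.exists_lt_succ_left]
  grind

lemma DPerfect.exists_sdiff_suppδ {Sk : Finset (Finset (Fin n))} (hD : DPerfect 𝔽 n k Sk) {r : ℕ}
    (hr : simRank 𝔽 n k Sk = r + 1) :
    ∃ V : Finset (Fin n), #V = k - 1 ∧ SimplicialFace k Sk V ∧
      simRank 𝔽 n k (Sk \ suppδ 𝔽 Sk V) = r ∧ DPerfect 𝔽 n k (Sk \ suppδ 𝔽 Sk V) := by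
  obtain ⟨V, ⟨-, hcard, hco⟩, hsimp⟩ := hD
  rw [hr] at hcard hco hsimp
  have hE : SimCocircuit 𝔽 n k Sk (suppδ 𝔽 Sk (V 0)) := by
    simpa [Cstar, delSeq] using hco 0 r.succ_pos
  have hrank : simRank 𝔽 n k (Sk \ suppδ 𝔽 Sk (V 0)) = r := by
    have := hE.simRank_sdiff_add_one
    omega
  refine ⟨V 0, hcard 0 r.succ_pos, hsimp 0 r.succ_pos, hrank, fun i => V (i + 1),
    ⟨rfl, fun j hj => hcard (j + 1) (by omega), fun j hj => ?_⟩, fun j hj => ?_⟩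
  · rw [Cstar_shift, delSeq_shift]
    exact hco (j + 1) (by omega)
  · rw [delSeq_shift]
    exact hsimp (j + 1) (by omega)

end DPerfect

section Faces

variable {n k : ℕ} {Sk : Finset (Finset (Fin n))}

lemma IsFace.mono {Sk' : Finset (Finset (Fin n))} (hsub : Sk' ⊆ Sk) {F : Finset (Fin n)}
    (h : IsFace k Sk' F) : IsFace k Sk F :=
  h.imp_right fun h G hG hGc => hsub (h G hG hGc)

lemma IsFace.erase_mem {X : Finset (Fin n)} (h : IsFace k Sk X) (hX : #X = k + 1) :
    ∀ i ∈ X, X.erase i ∈ Sk := fun i hi =>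
  (h.resolve_left (by omega)) _ (erase_subset i X) (by rw [card_erase_of_mem hi, hX]; rfl)

lemma SimplicialFace.exists_star (hSk : ∀ F ∈ Sk, #F = k) {V : Finset (Fin n)} (hV : #V + 1 = k)
    (h : SimplicialFace k Sk V) :
    ∃ X, V ⊂ X ∧ (∀ G ⊆ X, #G = k → G ∈ Sk) ∧ ∀ F ∈ Sk, V ⊆ F → F ⊆ X := by
  obtain ⟨X, ⟨hX, hVX⟩, huniq⟩ := h
  refine ⟨X, hVX, hX.1.resolve_left (by have := card_lt_card hVX; omega), fun F hF hVF => ?_⟩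
  have hFface : IsFace k Sk F := Or.inr fun G hG hGc =>
    eq_of_subset_of_card_le hG (by rw [hSk F hF, hGc]) ▸ hF
  obtain ⟨Y, hFY, hYmax⟩ := Finite.exists_le_maximal hFface
  have hYfacet : IsFacet k Sk Y := ⟨hYmax.1, fun G hG hYG => le_antisymm hYG (hYmax.2 hG hYG)⟩
  have hVF' : V ⊂ F := ssubset_of_subset_of_ne hVF fun h => by have := hSk F hF; subst h; omega
  exact huniq Y ⟨hYfacet, hVF'.trans_le hFY⟩ ▸ hFY

end Faces

section StrongTriangulation

variable {𝔽 : Type*} [Field 𝔽] {n k : ℕ}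

variable (𝔽 n k) in
def IsStrongTriangulation (Sk T : Finset (Finset (Fin n))) : Prop :=
  (∀ X ∈ T, #X = k + 1 ∧ IsFace k Sk X) ∧
    ∀ u : ↥Sk → 𝔽, bdryMap 𝔽 n k Sk u = 0 → IsFaceCombination 𝔽 Sk T u ((suppFin u).biUnion id)

lemma IsStrongTriangulation.stronglyTriangulable {Sk T : Finset (Finset (Fin n))}
    (hT : IsStrongTriangulation 𝔽 n k Sk T) : StronglyTriangulable 𝔽 n k Sk := by
  have hfaces : ∀ X ∈ T, ∀ i ∈ X, X.erase i ∈ Sk := fun X hX =>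
    (hT.1 X hX).2.erase_mem (hT.1 X hX).1
  have hmem : ∀ X ∈ T, pbdry 𝔽 Sk X ∈ Set.range fun i => pbdry 𝔽 Sk (T.equivFin.symm i) :=
    fun X hX => ⟨T.equivFin ⟨X, hX⟩, by simp⟩
  refine ⟨#T, fun i => T.equivFin.symm i, fun i => hT.1 _ (T.equivFin.symm i).2,
    le_antisymm ?_ fun u hu => (hT.2 u hu).mem_span hmem, fun C hC => ?_⟩
  · rw [Submodule.span_le]
    rintro _ ⟨i, rfl⟩
    exact bdryMap_pbdry (hfaces _ (T.equivFin.symm i).2)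
  · obtain ⟨u, hu, rfl⟩ := hC.exists_suppFin_eq
    obtain ⟨s, Y, a, hY, ha, hua, hU⟩ := hT.2 u hu
    exact ⟨s, fun j => T.equivFin ⟨Y j, hY j⟩, a, u, ha, rfl, by simpa using hua,
      by simpa using hU.symm⟩

lemma exists_isStrongTriangulation_of_sdiff {Sk : Finset (Finset (Fin n))}
    (hSk : ∀ F ∈ Sk, #F = k) {V : Finset (Fin n)} (hV : #V + 1 = k)
    (hsimp : SimplicialFace k Sk V) {T' : Finset (Finset (Fin n))}
    (hT' : IsStrongTriangulation 𝔽 n k (Sk \ suppδ 𝔽 Sk V) T') :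
    ∃ T, IsStrongTriangulation 𝔽 n k Sk T := by
  obtain ⟨X, hVX, hX, hstar⟩ := hsimp.exists_star hSk hV
  have hfaces : ∀ Y ∈ X.powersetCard (k + 1), ∀ i ∈ Y, Y.erase i ∈ Sk :=
    fun Y hY => erase_mem_of_mem_powersetCard hX hY
  refine ⟨T' ∪ X.powersetCard (k + 1), fun Y hY => ?_, fun u hu => ?_⟩
  · rcases mem_union.1 hY with hY | hY
    · exact ⟨(hT'.1 Y hY).1, (hT'.1 Y hY).2.mono sdiff_subset⟩
    · rw [mem_powersetCard] at hY
      exact ⟨hY.2, Or.inr fun G hG hGc => hX G (hG.trans hY.1) hGc⟩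
  obtain ⟨c, U, hc, hU, hvan⟩ := exists_star_correction hSk hV hVX hX hstar hu
  have hw : suppFin (u - c) ⊆ Sk \ suppδ 𝔽 Sk V := fun F hF =>
    mem_sdiff.2 ⟨suppFin_subset _ hF, fun h => hvan F hF ((mem_suppδ_iff hSk hV).1 h).2⟩
  have hw' := extendChain_extendChain (𝔽 := 𝔽) hw
  have hker : bdryMap 𝔽 n k (Sk \ suppδ 𝔽 Sk V) (extendChain 𝔽 Sk _ (u - c)) = 0 := by
    rw [← bdryMap_extendChain sdiff_subset, hw', map_sub, hu, hc.bdryMap_eq_zero hfaces, sub_zero]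
  have hwc := ((hT'.2 _ hker).extendChain (Sk := Sk) fun Y hY =>
    (hT'.1 Y hY).2.erase_mem (hT'.1 Y hY).1).mono (subset_union_left (s₂ := X.powersetCard (k + 1)))
  rw [hw', ← suppFin_extendChain (Sk := Sk) sdiff_subset, hw'] at hwc
  rw [← sub_add_cancel u c] at hU ⊢
  exact hwc.add_biUnion_suppFin (hc.mono subset_union_right) hU

theorem DPerfect.exists_isStrongTriangulation {Sk : Finset (Finset (Fin n))} (hk : 1 ≤ k)
    (hSk : ∀ F ∈ Sk, #F = k) (hD : DPerfect 𝔽 n k Sk) : ∃ T, IsStrongTriangulation 𝔽 n k Sk T := by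
  induction h : simRank 𝔽 n k Sk generalizing Sk with
  | zero =>
    obtain rfl := eq_empty_of_simRank_eq_zero hk hSk h
    refine ⟨∅, fun X hX => absurd hX (notMem_empty X), fun u _ => ?_⟩
    rw [Subsingleton.elim u 0, show suppFin (0 : ↥(∅ : Finset (Finset (Fin n))) → 𝔽) = ∅ from
      subset_empty.1 (suppFin_subset 0)]
    exact .zero
  | succ r ih =>
    obtain ⟨V, hV, hsimp, hrank, hD'⟩ := hD.exists_sdiff_suppδ h
    obtain ⟨T', hT'⟩ := ih (fun F hF => hSk F (mem_sdiff.1 hF).1) hD' hrank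
    exact exists_isStrongTriangulation_of_sdiff hSk (by omega) hsimp hT'

end StrongTriangulation

theorem stmt11_general (𝔽 : Type*) [Field 𝔽] (n k : ℕ) (hk : 2 ≤ k)
    (Sk : Finset (Finset (Fin n))) (hSk : ∀ F ∈ Sk, F.card = k)
    (hD : DPerfect 𝔽 n k Sk) : StronglyTriangulable 𝔽 n k Sk := by
  obtain ⟨T, hT⟩ := hD.exists_isStrongTriangulation (by omega) hSk
  exact hT.stronglyTriangulable

theorem stmt11 (𝔽 : Type*) [Field 𝔽] (n k : ℕ) (hk : 2 ≤ k) (hkn : k ≤ n)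
    (Sk : Finset (Finset (Fin n))) (hSk : ∀ F ∈ Sk, F.card = k)
    (hD : DPerfect 𝔽 n k Sk) : StronglyTriangulable 𝔽 n k Sk :=
  stmt11_general 𝔽 n k hk Sk hSk hD
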